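/- arXiv:2501.04626 — 5 statements merged into one kernel-verified Lean document; each statement's English description precedes it below -/
import Mathlib

section
/- Let H, X, Y be vector fields satisfying the sl(2,ℂ) bracket relations [H,X] = X, [H,Y] = −Y, [Y,X] = 2H. If z(t), ζ(t), ξ(t) is a solution of the geodesic system ż = ζZ(z), ζ̇ = ζξ, ξ̇ = ξ²/2 − ρ(z)ζ², then for any matrix (a b; c d) in SL(2,ℂ), the triple ( z((at+b)/(ct+d)), (ct+d)^{−2} ζ((at+b)/(ct+d)), (ct+d)^{−2} ξ((at+b)/(ct+d)) − 2c/(ct+d) ) is again a solution of the same system. -/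
/-!
The Möbius map `m t = (at+b)/(ct+d)` has derivative `(ct+d)⁻²` when `ad − bc = 1`, so
reparametrising by `m` multiplies velocities by `j = (ct+d)⁻²`; this is why `ζ` is rescaled
by `j`. The rescaled functions pick up the extra term `j' = −2c/(ct+d) · j` when
differentiated, and the shift `η = −2c/(ct+d)` of `ξ` absorbs it. The equation for `ξ`
survives because `η` itself solves it with `ζ = 0`: `η' = η²/2`.
-/

section Mobius

variable {𝕜 : Type*} [NontriviallyNormedField 𝕜] {a b c d t : 𝕜}

theorem hasDerivAt_affine : HasDerivAt (fun s => c * s + d) c t := by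
  simpa using ((hasDerivAt_id t).const_mul c).add_const d

theorem hasDerivAt_mobius (ht : c * t + d ≠ 0) :
    HasDerivAt (fun s => (a * s + b) / (c * s + d)) ((a * d - b * c) / (c * t + d) ^ 2) t := by
  have h := (hasDerivAt_affine (c := a) (d := b)).fun_div (hasDerivAt_affine (t := t)) ht
  exact h.congr_deriv (by ring)

theorem hasDerivAt_mobius_of_det_eq_one (hsl : a * d - b * c = 1) (ht : c * t + d ≠ 0) :
    HasDerivAt (fun s => (a * s + b) / (c * s + d)) ((c * t + d) ^ 2)⁻¹ t := by
  simpa only [hsl, one_div] using hasDerivAt_mobius (a := a) (b := b) ht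

theorem hasDerivAt_inv_affine_sq (ht : c * t + d ≠ 0) :
    HasDerivAt (fun s => ((c * s + d) ^ 2)⁻¹) (-(2 * c) / (c * t + d) * ((c * t + d) ^ 2)⁻¹) t := by
  have h := ((hasDerivAt_affine (c := c) (d := d) (t := t)).fun_pow 2).fun_inv (pow_ne_zero 2 ht)
  exact h.congr_deriv (by field_simp; ring)

theorem hasDerivAt_two_mul_div_affine (ht : c * t + d ≠ 0) :
    HasDerivAt (fun s => 2 * c / (c * s + d)) (-(2 * c / (c * t + d)) ^ 2 / 2) t := by
  have h := (hasDerivAt_const t (2 * c)).fun_div (hasDerivAt_affine (t := t)) ht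
  exact h.congr_deriv (by field_simp; ring)

theorem HasDerivAt.inv_affine_sq_mul_comp_mobius {f : 𝕜 → 𝕜} {f' : 𝕜}
    (hf : HasDerivAt f f' ((a * t + b) / (c * t + d))) (hsl : a * d - b * c = 1)
    (ht : c * t + d ≠ 0) :
    HasDerivAt (fun s => ((c * s + d) ^ 2)⁻¹ * f ((a * s + b) / (c * s + d)))
      (((c * t + d) ^ 2)⁻¹ *
        (((c * t + d) ^ 2)⁻¹ * f' - 2 * c / (c * t + d) * f ((a * t + b) / (c * t + d)))) t := by
  have h := (hasDerivAt_inv_affine_sq ht).fun_mul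
    (hf.comp t (hasDerivAt_mobius_of_det_eq_one hsl ht))
  exact h.congr_deriv (by simp only [Function.comp_apply]; ring)

end Mobius

/-- SL(2,ℂ)-equivariance of the solutions of the projective geodesic
system `ż = ζZ(z)`, `ζ̇ = ζξ`, `ξ̇ = ξ²/2 − ρ(z)ζ²`: if `(z, ζ, ξ)` is a solution
(on a set `T` of times) and `ad − bc = 1`, then
`( z∘m, (ct+d)⁻² ζ∘m, (ct+d)⁻² ξ∘m − 2c/(ct+d) )`, where `m t = (at+b)/(ct+d)`,
is again a solution (at times `t` with `ct + d ≠ 0` and `m t ∈ T`). -/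
theorem stmt_6 {E : Type*} [NormedAddCommGroup E] [NormedSpace ℂ E]
    (Z : E → E) (ρ : E → ℂ) (T : Set ℂ)
    (z : ℂ → E) (ζ ξ : ℂ → ℂ)
    (hz : ∀ t ∈ T, HasDerivAt z (ζ t • Z (z t)) t)
    (hζ : ∀ t ∈ T, HasDerivAt ζ (ζ t * ξ t) t)
    (hξ : ∀ t ∈ T, HasDerivAt ξ ((ξ t) ^ 2 / 2 - ρ (z t) * (ζ t) ^ 2) t)
    (a b c d : ℂ) (hsl2 : a * d - b * c = 1) :
    ∀ t : ℂ, c * t + d ≠ 0 → (a * t + b) / (c * t + d) ∈ T →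
      HasDerivAt (fun s => z ((a * s + b) / (c * s + d)))
        ((((c * t + d) ^ 2)⁻¹ * ζ ((a * t + b) / (c * t + d))) •
          Z (z ((a * t + b) / (c * t + d)))) t ∧
      HasDerivAt (fun s => ((c * s + d) ^ 2)⁻¹ * ζ ((a * s + b) / (c * s + d)))
        ((((c * t + d) ^ 2)⁻¹ * ζ ((a * t + b) / (c * t + d))) *
          (((c * t + d) ^ 2)⁻¹ * ξ ((a * t + b) / (c * t + d)) - 2 * c / (c * t + d))) t ∧
      HasDerivAt (fun s => ((c * s + d) ^ 2)⁻¹ * ξ ((a * s + b) / (c * s + d))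
            - 2 * c / (c * s + d))
        ((((c * t + d) ^ 2)⁻¹ * ξ ((a * t + b) / (c * t + d)) - 2 * c / (c * t + d)) ^ 2 / 2
          - ρ (z ((a * t + b) / (c * t + d))) *
            (((c * t + d) ^ 2)⁻¹ * ζ ((a * t + b) / (c * t + d))) ^ 2) t := by
  intro t ht hmt
  refine ⟨?_, ?_, ?_⟩
  · exact ((hz _ hmt).scomp t (hasDerivAt_mobius_of_det_eq_one hsl2 ht)).congr_deriv
      (smul_smul _ _ _)
  · exact ((hζ _ hmt).inv_affine_sq_mul_comp_mobius hsl2 ht).congr_deriv (by ring)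
  · have h := ((hξ _ hmt).inv_affine_sq_mul_comp_mobius hsl2 ht).fun_sub
      (hasDerivAt_two_mul_div_affine ht)
    exact h.congr_deriv (by ring)
end

section
/- Let H and X be vector fields on a complex manifold with [H,X] = X. Then the flows satisfy Φ_{H+cX}^t = Φ_H^t ∘ Φ_X^{c(e^t−1)} for all c ∈ ℂ and all times t where both sides are defined. -/
/-!
Put `S t := Φ_H^t ∘ Φ_X^{c(e^t-1)}`. Since `H + cX` is Lipschitz, it suffices to show that
`t ↦ S t x` solves the ODE of `H + cX`; complex-time ODE facts are reduced to real time along the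
rays `r ↦ r t`.

The bracket relation enters through the linearised flow: `τ ↦ e^{-τ} X(Φ_H^τ y)` solves the
variational equation of `H` along `τ ↦ Φ_H^τ y`, so `σ ↦ Φ_H^t (Φ_X^σ x)` is an integral curve of
`e^{-t} X`, i.e. `Φ_H^t ∘ Φ_X^σ = Φ_X^{e^{-t} σ} ∘ Φ_H^t`. With this commutation rule `S` is a
one-parameter group, `S (s + t) = S s ∘ S t`, so its velocity only has to be computed at `s = 0`,
where both flows are Lipschitz perturbations of the identity and the velocities simply add up to
`H + c X`.
-/

open Set Filter Topology Asymptotics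

theorem gronwallBound_le_mul_exp {δ K ε x : ℝ} (hK : 0 ≤ K) (hε : 0 ≤ ε) :
    gronwallBound δ K ε x ≤ (δ + ε * x) * Real.exp (K * x) := by
  rcases hK.eq_or_lt with rfl | hK
  · simp [gronwallBound_K0]
  rw [gronwallBound_of_K_ne_0 hK.ne']
  have hexp : Real.exp (K * x) - 1 ≤ K * x * Real.exp (K * x) := by
    have h1 := Real.add_one_le_exp (-(K * x))
    have h2 : Real.exp (K * x) * Real.exp (-(K * x)) = 1 := by rw [← Real.exp_add]; simp
    nlinarith [Real.exp_pos (K * x)]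
  have : ε / K * (Real.exp (K * x) - 1) ≤ ε * x * Real.exp (K * x) := by
    rw [div_mul_eq_mul_div, div_le_iff₀ hK]
    nlinarith
  nlinarith

theorem IsCompact.exists_norm_sub_sub_fderiv_le {𝕜 E F : Type*} [RCLike 𝕜]
    [NormedAddCommGroup E] [NormedSpace 𝕜 E] [NormedAddCommGroup F] [NormedSpace 𝕜 F]
    {f : E → F} (hf : ContDiff 𝕜 1 f) {S : Set E} (hS : IsCompact S) {ε : ℝ} (hε : 0 < ε) :
    ∃ δ > 0, ∀ b ∈ S, ∀ a, dist a b < δ → ‖f a - f b - fderiv 𝕜 f b (a - b)‖ ≤ ε * ‖a - b‖ := by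
  obtain ⟨δ, hδ, hclose⟩ := Metric.mem_uniformity_dist.1 <|
    hS.uniformContinuousAt_of_continuousAt (fderiv 𝕜 f)
      (fun b _ => (hf.continuous_fderiv one_ne_zero).continuousAt) (Metric.dist_mem_uniformity hε)
  refine ⟨δ, hδ, fun b hb a ha => ?_⟩
  let : NormedSpace ℝ E := NormedSpace.restrictScalars ℝ 𝕜 E
  refine Convex.norm_image_sub_le_of_norm_fderiv_le' (s := Metric.ball b δ)
    (fun x _ => (hf.differentiable one_ne_zero) x) (fun x hx => ?_) (convex_ball b δ)
    (Metric.mem_ball_self hδ) ha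
  rw [← dist_eq_norm, dist_comm]
  exact (hclose (Metric.mem_ball'.1 hx) hb).le

section Flow

variable {E : Type*} [NormedAddCommGroup E] [NormedSpace ℂ E]

structure IsComplexTimeFlow (f : E → E) (P : ℂ → E → E) : Prop where
  zero : ∀ x, P 0 x = x
  hasDerivAt : ∀ t x, HasDerivAt (fun s => P s x) (f (P t x)) t

theorem HasDerivAt.comp_ofReal_mul {g : ℂ → E} {d : E} (t : ℂ) {r : ℝ}
    (h : HasDerivAt g d (r * t)) : HasDerivAt (fun r : ℝ => g (r * t)) (t • d) r := by
  simpa [Function.comp_def] using (h.hasFDerivAt.restrictScalars ℝ).comp_hasDerivAt r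
    ((Complex.ofRealCLM.hasDerivAt (x := r)).mul_const t)

theorem Complex.norm_ofReal_mul_le {r : ℝ} (hr : r ∈ Icc (0 : ℝ) 1) (t : ℂ) :
    ‖(r : ℂ) * t‖ ≤ ‖t‖ := by
  rw [norm_mul, Complex.norm_real, Real.norm_of_nonneg hr.1]
  exact mul_le_of_le_one_left (norm_nonneg t) hr.2

theorem eq_of_hasDerivAt_of_lipschitzWith {f : E → E} {K : NNReal} (hf : LipschitzWith K f)
    {a b : ℂ → E} (ha : ∀ τ, HasDerivAt a (f (a τ)) τ) (hb : ∀ τ, HasDerivAt b (f (b τ)) τ)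
    (h0 : a 0 = b 0) (t : ℂ) : a t = b t := by
  have hv : ∀ _r : ℝ, LipschitzOnWith (‖t‖₊ * K) (fun y => t • f y) univ :=
    fun _ => ((lipschitzWith_smul t).comp hf).lipschitzOnWith
  have := ODE_solution_unique_univ hv (fun r => ⟨(ha _).comp_ofReal_mul t, mem_univ _⟩)
    (fun r => ⟨(hb _).comp_ofReal_mul t, mem_univ _⟩) (t₀ := 0) (by simpa using h0)
  simpa using congrFun this 1

namespace IsComplexTimeFlow

variable {f : E → E} {P : ℂ → E → E} {K : NNReal}

theorem hasDerivAt_ray (hP : IsComplexTimeFlow f P) (t : ℂ) (x : E) (r : ℝ) :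
    HasDerivAt (fun r : ℝ => P (r * t) x) (t • f (P (r * t) x)) r :=
  (hP.hasDerivAt _ x).comp_ofReal_mul t

theorem continuous_ray (hP : IsComplexTimeFlow f P) (t : ℂ) (x : E) :
    Continuous fun r : ℝ => P (r * t) x :=
  continuous_iff_continuousAt.2 fun r => (hP.hasDerivAt_ray t x r).continuousAt

theorem dist_le (hP : IsComplexTimeFlow f P) (hf : LipschitzWith K f) (t : ℂ) (u v : E) :
    dist (P t u) (P t v) ≤ dist u v * Real.exp (K * ‖t‖) := by
  have hv : ∀ _r : ℝ, LipschitzWith (‖t‖₊ * K) (fun y => t • f y) :=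
    fun _ => (lipschitzWith_smul t).comp hf
  have := dist_le_of_trajectories_ODE hv (hP.continuous_ray t u).continuousOn
    (fun r _ => (hP.hasDerivAt_ray t u r).hasDerivWithinAt)
    (hP.continuous_ray t v).continuousOn (fun r _ => (hP.hasDerivAt_ray t v r).hasDerivWithinAt)
    (by simp [hP.zero] : dist _ _ ≤ dist u v) 1 (right_mem_Icc.2 zero_le_one)
  simpa [mul_comm] using this

theorem add (hP : IsComplexTimeFlow f P) (hf : LipschitzWith K f) (s t : ℂ) (x : E) :
    P (s + t) x = P s (P t x) :=
  eq_of_hasDerivAt_of_lipschitzWith hf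
    (fun τ => by simpa using (hP.hasDerivAt (τ + t) x).comp_add_const τ t)
    (fun τ => hP.hasDerivAt τ (P t x)) (by simp [hP.zero]) s

theorem dist_ray_le (hP : IsComplexTimeFlow f P) (hf : LipschitzWith K f) (t : ℂ) (u v : E)
    {r : ℝ} (hr : r ∈ Icc (0 : ℝ) 1) :
    dist (P (r * t) u) (P (r * t) v) ≤ dist u v * Real.exp (K * ‖t‖) := by
  refine (hP.dist_le hf _ u v).trans ?_
  gcongr
  exact Complex.norm_ofReal_mul_le hr t

theorem norm_sub_sub_le (hP : IsComplexTimeFlow f P) (hf : LipschitzWith K f) (s : ℂ) (u v : E) :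
    ‖P s u - P s v - (u - v)‖ ≤ ‖s‖ * K * Real.exp (K * ‖s‖) * ‖u - v‖ := by
  have hD : ∀ r : ℝ, HasDerivAt (fun r : ℝ => P (r * s) u - P (r * s) v)
      (s • f (P (r * s) u) - s • f (P (r * s) v)) r :=
    fun r => (hP.hasDerivAt_ray s u r).sub (hP.hasDerivAt_ray s v r)
  have bound : ∀ r ∈ Ico (0 : ℝ) 1,
      ‖s • f (P (r * s) u) - s • f (P (r * s) v)‖ ≤ ‖s‖ * K * Real.exp (K * ‖s‖) * ‖u - v‖ := by
    intro r hr
    rw [← smul_sub, norm_smul, ← dist_eq_norm, ← dist_eq_norm, mul_assoc, mul_assoc]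
    gcongr
    refine hf.dist_le_mul_of_le (hP.dist_ray_le hf s u v (Ico_subset_Icc_self hr)) |>.trans ?_
    rw [mul_comm (dist u v)]
  have := norm_image_sub_le_of_norm_deriv_le_segment'
    (fun r _ => (hD r).hasDerivWithinAt) bound 1 (right_mem_Icc.2 zero_le_one)
  simpa [hP.zero] using this

theorem hasDerivAt_comp_at_zero (hP : IsComplexTimeFlow f P) (hf : LipschitzWith K f)
    {z : ℂ → E} {w : E} (hz : HasDerivAt z w 0) :
    HasDerivAt (fun s => P s (z s)) (f (z 0) + w) 0 := by
  have hlim : Tendsto (fun s : ℂ => K * Real.exp (K * ‖s‖) * ‖z s - z 0‖) (𝓝 0) (𝓝 0) := by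
    have hzc := hz.continuousAt
    have : ContinuousAt (fun s : ℂ => K * Real.exp (K * ‖s‖) * ‖z s - z 0‖) 0 := by fun_prop
    simpa using this.tendsto
  have hcross : (fun s => P s (z s) - P s (z 0) - (z s - z 0)) =o[𝓝 0] fun s => s - 0 := by
    refine isLittleO_iff.2 fun c hc => ?_
    filter_upwards [hlim.eventually (eventually_le_nhds hc)] with s hs
    calc ‖P s (z s) - P s (z 0) - (z s - z 0)‖
        ≤ ‖s‖ * K * Real.exp (K * ‖s‖) * ‖z s - z 0‖ := hP.norm_sub_sub_le hf s _ _
      _ ≤ c * ‖s - 0‖ := by rw [sub_zero]; nlinarith [norm_nonneg s]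
  have hcurve := hasDerivAt_iff_isLittleO.1 hz
  have hflow := hasDerivAt_iff_isLittleO.1 (hP.hasDerivAt 0 (z 0))
  refine hasDerivAt_iff_isLittleO.2 ((hcross.add hcurve).add hflow |>.congr_left fun s => ?_)
  simp only [hP.zero, smul_add]
  abel

theorem norm_sub_sub_le_gronwallBound (hP : IsComplexTimeFlow f P) {t : ℂ} {a b : E}
    {L : ℂ → E →L[ℂ] E} {V : ℂ → E} (hV : ∀ τ, HasDerivAt V (L τ (V τ)) τ) {M ε : ℝ}
    (hM : ∀ r ∈ Icc (0 : ℝ) 1, ‖L (r * t)‖ ≤ M)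
    (hε : ∀ r ∈ Icc (0 : ℝ) 1, ‖f (P (r * t) a) - f (P (r * t) b)
      - L (r * t) (P (r * t) a - P (r * t) b)‖ ≤ ε) :
    ‖P t a - P t b - V t‖ ≤ gronwallBound ‖a - b - V 0‖ (‖t‖ * M) (‖t‖ * ε) 1 := by
  set D : ℝ → E := fun r => P (r * t) a - P (r * t) b - V (r * t)
  have hD : ∀ r : ℝ, HasDerivAt D
      (t • f (P (r * t) a) - t • f (P (r * t) b) - t • L (r * t) (V (r * t))) r :=
    fun r => ((hP.hasDerivAt_ray t a r).sub (hP.hasDerivAt_ray t b r)).sub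
      ((hV _).comp_ofReal_mul t)
  have bound : ∀ r ∈ Ico (0 : ℝ) 1,
      ‖t • f (P (r * t) a) - t • f (P (r * t) b) - t • L (r * t) (V (r * t))‖
        ≤ ‖t‖ * M * ‖D r‖ + ‖t‖ * ε := by
    intro r hr
    have hr' := Ico_subset_Icc_self hr
    have hsplit : t • f (P (r * t) a) - t • f (P (r * t) b) - t • L (r * t) (V (r * t))
        = t • ((f (P (r * t) a) - f (P (r * t) b) - L (r * t) (P (r * t) a - P (r * t) b))
          + L (r * t) (D r)) := by
      simp only [D, map_sub]
      module
    rw [hsplit, norm_smul]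
    have hL := (L (r * t)).le_of_opNorm_le (hM r hr') (D r)
    have := norm_add_le_of_le (hε r hr') hL
    nlinarith [norm_nonneg t]
  have := norm_le_gronwallBound_of_norm_deriv_right_le
    (continuous_iff_continuousAt.2 fun r => (hD r).continuousAt).continuousOn
    (fun r _ => (hD r).hasDerivWithinAt) (by simp [D, hP.zero] : ‖D 0‖ ≤ ‖a - b - V 0‖) bound 1
    (right_mem_Icc.2 zero_le_one)
  simpa [D] using this

theorem norm_sub_sub_le_of_taylor (hP : IsComplexTimeFlow f P) (hf : LipschitzWith K f)
    {t : ℂ} {a b : E} {V : ℂ → E} (hV : ∀ τ, HasDerivAt V (fderiv ℂ f (P τ b) (V τ)) τ)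
    {M ε δ : ℝ} (hM₀ : 0 ≤ M) (hε : 0 ≤ ε)
    (hM : ∀ r ∈ Icc (0 : ℝ) 1, ‖fderiv ℂ f (P (r * t) b)‖ ≤ M)
    (htaylor : ∀ r ∈ Icc (0 : ℝ) 1, ∀ a', dist a' (P (r * t) b) < δ →
      ‖f a' - f (P (r * t) b) - fderiv ℂ f (P (r * t) b) (a' - P (r * t) b)‖
        ≤ ε * ‖a' - P (r * t) b‖)
    (hab : dist a b * Real.exp (K * ‖t‖) < δ) :
    ‖P t a - P t b - V t‖
      ≤ (‖a - b - V 0‖ + ‖t‖ * ε * Real.exp (K * ‖t‖) * ‖a - b‖) * Real.exp (‖t‖ * M) := by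
  have hrem : ∀ r ∈ Icc (0 : ℝ) 1, ‖f (P (r * t) a) - f (P (r * t) b)
      - fderiv ℂ f (P (r * t) b) (P (r * t) a - P (r * t) b)‖
        ≤ ε * (Real.exp (K * ‖t‖) * ‖a - b‖) := by
    intro r hr
    have hdist := hP.dist_ray_le hf t a b hr
    refine (htaylor r hr _ (hdist.trans_lt hab)).trans ?_
    rw [← dist_eq_norm, ← dist_eq_norm, mul_comm (Real.exp _)]
    gcongr
  refine (hP.norm_sub_sub_le_gronwallBound hV hM hrem).trans ?_
  refine (gronwallBound_le_mul_exp (by positivity) (by positivity)).trans_eq ?_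
  ring_nf

theorem hasDerivAt_comp_of_linearized (hP : IsComplexTimeFlow f P) (hf : LipschitzWith K f)
    (hf₁ : ContDiff ℂ 1 f) {y : ℂ → E} {σ₀ : ℂ} {V : ℂ → E} (hy : HasDerivAt y (V 0) σ₀)
    (hV : ∀ τ, HasDerivAt V (fderiv ℂ f (P τ (y σ₀)) (V τ)) τ) (t : ℂ) :
    HasDerivAt (fun σ => P t (y σ)) (V t) σ₀ := by
  set b := y σ₀
  set S := (fun r : ℝ => P (r * t) b) '' Icc 0 1
  have hS : IsCompact S := isCompact_Icc.image (hP.continuous_ray t b)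
  have hbS : b ∈ S := ⟨0, left_mem_Icc.2 zero_le_one, by simp [hP.zero]⟩
  obtain ⟨M, hM⟩ := hS.exists_bound_of_continuousOn
    (hf₁.continuous_fderiv one_ne_zero).continuousOn
  have hM₀ : 0 ≤ M := (norm_nonneg _).trans (hM b hbS)
  obtain ⟨Cy, hCy, hyO⟩ := hy.isBigO_sub.exists_pos
  set CP := Real.exp (K * ‖t‖)
  set e := Real.exp (‖t‖ * M)
  have he : 0 < e := Real.exp_pos _
  rw [hasDerivAt_iff_isLittleO, isLittleO_iff]
  intro c hc
  set ε := c / (2 * e * (‖t‖ * CP * Cy + 1))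
  obtain ⟨δ, hδ, htaylor⟩ := hS.exists_norm_sub_sub_fderiv_le hf₁ (ε := ε) (by positivity)
  have hnear : ∀ᶠ σ in 𝓝 σ₀, dist (y σ) b < δ / CP :=
    hy.continuousAt.eventually (Metric.ball_mem_nhds b (by positivity))
  filter_upwards [hyO.bound, (hasDerivAt_iff_isLittleO.1 hy).def (c := c / (2 * e)) (by positivity),
    hnear] with σ hyb hlin hσ
  have hV' : ∀ τ, HasDerivAt (fun τ => (σ - σ₀) • V τ)
      (fderiv ℂ f (P τ b) ((σ - σ₀) • V τ)) τ := fun τ => by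
    rw [map_smul]; exact (hV τ).const_smul (σ - σ₀)
  refine (hP.norm_sub_sub_le_of_taylor hf hV' hM₀ (by positivity) (fun r hr => hM _ ⟨r, hr, rfl⟩)
    (fun r hr => htaylor _ ⟨r, hr, rfl⟩) ((lt_div_iff₀ (by positivity)).1 hσ)).trans ?_
  have hlin' : ‖y σ - b - (σ - σ₀) • V 0‖ * e ≤ c / 2 * ‖σ - σ₀‖ := by
    rw [div_mul_eq_mul_div, le_div_iff₀ (by positivity)] at hlin
    nlinarith
  have hεe : ε * e * (‖t‖ * CP * Cy) ≤ c / 2 := by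
    rw [div_mul_eq_mul_div, div_mul_eq_mul_div, div_le_iff₀ (by positivity)]
    nlinarith [mul_pos hc he]
  calc (‖y σ - b - (σ - σ₀) • V 0‖ + ‖t‖ * ε * CP * ‖y σ - b‖) * e
      = ‖y σ - b - (σ - σ₀) • V 0‖ * e + ε * e * (‖t‖ * CP) * ‖y σ - b‖ := by ring
    _ ≤ c / 2 * ‖σ - σ₀‖ + ε * e * (‖t‖ * CP) * (Cy * ‖σ - σ₀‖) := by gcongr
    _ = c / 2 * ‖σ - σ₀‖ + ε * e * (‖t‖ * CP * Cy) * ‖σ - σ₀‖ := by ring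
    _ ≤ c / 2 * ‖σ - σ₀‖ + c / 2 * ‖σ - σ₀‖ := by gcongr
    _ = c * ‖σ - σ₀‖ := by ring

end IsComplexTimeFlow

end Flow

section LieBracket

variable {E : Type*} [NormedAddCommGroup E] [NormedSpace ℂ E] {H X : E → E} {K L : NNReal}
  {ΦH ΦX : ℂ → E → E}

theorem hasDerivAt_exp_neg_smul_of_bracket (hX : Differentiable ℂ X)
    (hbracket : ∀ x, fderiv ℂ X x (H x) - fderiv ℂ H x (X x) = X x) {G : ℂ → E}
    (hG : ∀ τ, HasDerivAt G (H (G τ)) τ) (τ : ℂ) :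
    HasDerivAt (fun τ => Complex.exp (-τ) • X (G τ))
      (fderiv ℂ H (G τ) (Complex.exp (-τ) • X (G τ))) τ := by
  have hexp : HasDerivAt (fun τ => Complex.exp (-τ)) (-Complex.exp (-τ)) τ := by
    simpa using (hasDerivAt_neg τ).cexp
  refine (hexp.smul ((hX (G τ)).hasFDerivAt.comp_hasDerivAt τ (hG τ))).congr_deriv ?_
  rw [map_smul, Function.comp_apply]
  linear_combination (norm := module) Complex.exp (-τ) • hbracket (G τ)

theorem IsComplexTimeFlow.hasDerivAt_comp_flow_of_bracket (hH : IsComplexTimeFlow H ΦH)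
    (hX : IsComplexTimeFlow X ΦX) (hHl : LipschitzWith K H) (hH₁ : ContDiff ℂ 1 H)
    (hXd : Differentiable ℂ X)
    (hbracket : ∀ x, fderiv ℂ X x (H x) - fderiv ℂ H x (X x) = X x) (t σ₀ : ℂ) (x : E) :
    HasDerivAt (fun σ => ΦH t (ΦX σ x)) (Complex.exp (-t) • X (ΦH t (ΦX σ₀ x))) σ₀ := by
  refine hH.hasDerivAt_comp_of_linearized hHl hH₁ ?_
    (hasDerivAt_exp_neg_smul_of_bracket hXd hbracket (hH.hasDerivAt · (ΦX σ₀ x))) t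
  simpa [hH.zero] using hX.hasDerivAt σ₀ x

theorem IsComplexTimeFlow.comp_flow_of_bracket (hH : IsComplexTimeFlow H ΦH)
    (hX : IsComplexTimeFlow X ΦX) (hHl : LipschitzWith K H) (hXl : LipschitzWith L X)
    (hH₁ : ContDiff ℂ 1 H) (hXd : Differentiable ℂ X)
    (hbracket : ∀ x, fderiv ℂ X x (H x) - fderiv ℂ H x (X x) = X x) (t σ : ℂ) (x : E) :
    ΦH t (ΦX σ x) = ΦX (Complex.exp (-t) * σ) (ΦH t x) := by
  refine eq_of_hasDerivAt_of_lipschitzWith ((lipschitzWith_smul (Complex.exp (-t))).comp hXl)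
    (hH.hasDerivAt_comp_flow_of_bracket hX hHl hH₁ hXd hbracket t · x)
    (b := fun σ => ΦX (Complex.exp (-t) * σ) (ΦH t x)) (fun σ => ?_) (by simp [hX.zero]) σ
  simpa [Function.comp_def] using (hX.hasDerivAt _ (ΦH t x)).scomp σ ((hasDerivAt_id σ).const_mul _)

theorem IsComplexTimeFlow.comp_flow_exp_add (hH : IsComplexTimeFlow H ΦH)
    (hX : IsComplexTimeFlow X ΦX) (hHl : LipschitzWith K H) (hXl : LipschitzWith L X)
    (hH₁ : ContDiff ℂ 1 H) (hXd : Differentiable ℂ X)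
    (hbracket : ∀ x, fderiv ℂ X x (H x) - fderiv ℂ H x (X x) = X x) (c s t : ℂ) (x : E) :
    ΦH (s + t) (ΦX (c * (Complex.exp (s + t) - 1)) x)
      = ΦH s (ΦX (c * (Complex.exp s - 1)) (ΦH t (ΦX (c * (Complex.exp t - 1)) x))) := by
  have hswap : ∀ σ y, ΦX σ (ΦH t y) = ΦH t (ΦX (Complex.exp t * σ) y) := fun σ y => by
    rw [hH.comp_flow_of_bracket hX hHl hXl hH₁ hXd hbracket, ← mul_assoc, ← Complex.exp_add,
      neg_add_cancel, Complex.exp_zero, one_mul]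
  rw [hswap, ← hX.add hXl, ← hH.add hHl, Complex.exp_add]
  ring_nf

theorem IsComplexTimeFlow.hasDerivAt_comp_flow_exp (hH : IsComplexTimeFlow H ΦH)
    (hX : IsComplexTimeFlow X ΦX) (hHl : LipschitzWith K H) (hXl : LipschitzWith L X)
    (hH₁ : ContDiff ℂ 1 H) (hXd : Differentiable ℂ X)
    (hbracket : ∀ x, fderiv ℂ X x (H x) - fderiv ℂ H x (X x) = X x) (c t : ℂ) (x : E) :
    HasDerivAt (fun t => ΦH t (ΦX (c * (Complex.exp t - 1)) x))
      (H (ΦH t (ΦX (c * (Complex.exp t - 1)) x)) + c • X (ΦH t (ΦX (c * (Complex.exp t - 1)) x)))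
      t := by
  set y := ΦH t (ΦX (c * (Complex.exp t - 1)) x)
  have hz : HasDerivAt (fun s => ΦX (c * (Complex.exp s - 1)) y) (c • X y) 0 := by
    simpa [hX.zero, Function.comp_def] using
      (hX.hasDerivAt _ y).scomp 0 (((Complex.hasDerivAt_exp 0).sub_const 1).const_mul c)
  have h0 := hH.hasDerivAt_comp_at_zero hHl hz
  rw [← sub_self t] at h0
  convert h0.comp_sub_const t t using 1
  · ext u
    rw [← hH.comp_flow_exp_add hX hHl hXl hH₁ hXd hbracket, sub_add_cancel]
  · simp [hX.zero, y]

end LieBracket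

/-- if `[H,X] = X` then the flows satisfy
`Φ_{H+cX}^t = Φ_H^t ∘ Φ_X^{c(e^t−1)}`. Here `H` and `X` are (globally Lipschitz,
smooth) vector fields on a complex normed space, `Φ_H, Φ_X, Φ` are flows of `H`,
`X` and `H + cX` respectively, and the Lie bracket is
`[H,X](x) = DX(x)·H(x) − DH(x)·X(x)`. -/
theorem stmt_7 {E : Type*} [NormedAddCommGroup E] [NormedSpace ℂ E]
    (H X : E → E) (K L : NNReal)
    (hHl : LipschitzWith K H) (hXl : LipschitzWith L X)
    (hHs : ContDiff ℂ ⊤ H) (hXs : ContDiff ℂ ⊤ X)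
    (hbracket : ∀ x, fderiv ℂ X x (H x) - fderiv ℂ H x (X x) = X x)
    (c : ℂ) (ΦH ΦX Φ : ℂ → E → E)
    (hΦH0 : ∀ x, ΦH 0 x = x) (hΦX0 : ∀ x, ΦX 0 x = x) (hΦ0 : ∀ x, Φ 0 x = x)
    (hΦH : ∀ t x, HasDerivAt (fun s => ΦH s x) (H (ΦH t x)) t)
    (hΦX : ∀ t x, HasDerivAt (fun s => ΦX s x) (X (ΦX t x)) t)
    (hΦ : ∀ t x, HasDerivAt (fun s => Φ s x) (H (Φ t x) + c • X (Φ t x)) t) :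
    ∀ t x, Φ t x = ΦH t (ΦX (c * (Complex.exp t - 1)) x) := by
  intro t x
  have hH : IsComplexTimeFlow H ΦH := ⟨hΦH0, hΦH⟩
  have hX : IsComplexTimeFlow X ΦX := ⟨hΦX0, hΦX⟩
  exact eq_of_hasDerivAt_of_lipschitzWith (hHl.add ((lipschitzWith_smul c).comp hXl))
    (hΦ · x) (hH.hasDerivAt_comp_flow_exp hX hHl hXl (hHs.of_le le_top)
      (hXs.differentiable (by simp)) hbracket c · x) (by simp [hΦ0, hΦH0, hΦX0]) t
end

section
/- Let λ₁,…,λₙ be nonzero complex numbers, h = Σ_I a_I x^I a convergent power series near 0 ∈ ℂⁿ with a_I = 0 whenever ⟨λ,I⟩ = −1. Then the power series g = Σ_I b_I x^I with b_I = −a_I/(1 + ⟨λ,I⟩) (and b_I = 0 when ⟨λ,I⟩ = −1) converges near 0 and satisfies (Σᵢ λᵢ xᵢ ∂g/∂xᵢ) + g + h = 0. -/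
/-!
Because the `λᵢ` are integers, `|1 + ⟨λ,I⟩| ≥ 1` unless it vanishes, so `|b_I| ≤ |a_I|` and `g`
inherits the Cauchy estimates `|a_I| ρ^|I| ≤ C` of `h`. On the polydisc of radius `ρ/4` these
estimates give the summable majorant `(4C/ρ) 2^(-|I|)` for the termwise derivatives, so `g` can be
differentiated term by term. The Euler operator `Σ λᵢ xᵢ ∂ᵢ` multiplies `x^I` by `⟨λ,I⟩`, and
`(1 + ⟨λ,I⟩) b_I = -a_I` then kills every coefficient of `Σ λᵢ xᵢ ∂ᵢ g + g + h`.
-/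

open Finset

theorem summable_prod_apply {α : Type*} {f : α → ℝ} (hf : Summable f) (hf0 : 0 ≤ f) :
    ∀ n : ℕ, Summable fun I : Fin n → α => ∏ j, f (I j)
  | 0 => .of_finite
  | n + 1 => by
    rw [← (Fin.consEquiv fun _ : Fin (n + 1) => α).summable_iff]
    simpa [Function.comp_def, Fin.prod_univ_succ] using
      hf.mul_of_nonneg (summable_prod_apply hf hf0 n) hf0 fun I => prod_nonneg fun j _ => hf0 _

theorem summable_pow_sum {q : ℝ} (hq0 : 0 ≤ q) (hq1 : q < 1) (n : ℕ) :
    Summable fun I : Fin n → ℕ => q ^ ∑ j, I j := by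
  simpa only [prod_pow_eq_pow_sum] using
    summable_prod_apply (summable_geometric_of_lt_one hq0 hq1) (fun _ => pow_nonneg hq0 _) n

/-- Also covers `1 + m = 0`, through the junk value `z / 0 = 0`. -/
theorem norm_div_one_add_intCast_le (z : ℂ) (m : ℤ) : ‖z / (1 + m)‖ ≤ ‖z‖ := by
  rw [norm_div, show (1 + m : ℂ) = ((1 + m : ℤ) : ℂ) by push_cast; rfl, Complex.norm_intCast]
  rcases eq_or_ne (1 + m) 0 with h | h
  · simp [h]
  · exact div_le_self (norm_nonneg z) (by exact_mod_cast Int.one_le_abs h)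

section

variable {n : ℕ}

noncomputable def monomialFDeriv (I : Fin n → ℕ) (x : Fin n → ℂ) : (Fin n → ℂ) →L[ℂ] ℂ :=
  ∑ j, (∏ k ∈ univ.erase j, x k ^ I k) • ((I j * x j ^ (I j - 1)) • ContinuousLinearMap.proj j)

theorem hasFDerivAt_monomial (I : Fin n → ℕ) (x : Fin n → ℂ) :
    HasFDerivAt (fun y : Fin n → ℂ => ∏ j, y j ^ I j) (monomialFDeriv I x) x :=
  HasFDerivAt.finsetProd fun j _ =>
    (hasDerivAt_pow (I j) (x j)).comp_hasFDerivAt x (hasFDerivAt_apply j x)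

theorem mul_monomialFDeriv_single (I : Fin n → ℕ) (x : Fin n → ℂ) (i : Fin n) :
    x i * monomialFDeriv I x (Pi.single i 1) = I i * ∏ j, x j ^ I j := by
  classical
  rw [monomialFDeriv, _root_.sum_apply, sum_eq_single i, ← mul_prod_erase univ _ (mem_univ i)]
  · simp only [Pi.single_eq_same, smul_apply, ContinuousLinearMap.proj_apply,
      smul_eq_mul, mul_one]
    cases I i with
    | zero => simp
    | succ m => rw [pow_succ]; push_cast; ring
  · intro j _ hj
    simp [Pi.single_eq_of_ne hj]
  · simp

theorem norm_prod_pow_le {s : ℝ} {y : Fin n → ℂ} (hy : ∀ k, ‖y k‖ ≤ s) (I : Fin n → ℕ)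
    (t : Finset (Fin n)) : ‖∏ k ∈ t, y k ^ I k‖ ≤ s ^ ∑ k ∈ t, I k := by
  rw [norm_prod, ← prod_pow_eq_pow_sum]
  gcongr with k
  rw [norm_pow]
  exact pow_le_pow_left₀ (norm_nonneg _) (hy k) _

theorem norm_proj_le_one (j : Fin n) :
    ‖(ContinuousLinearMap.proj j : (Fin n → ℂ) →L[ℂ] ℂ)‖ ≤ 1 :=
  ContinuousLinearMap.opNorm_le_bound _ zero_le_one fun z => by simpa using norm_le_pi_norm z j

theorem mul_norm_monomialFDeriv_le {s : ℝ} (hs : 0 ≤ s) (I : Fin n → ℕ) {y : Fin n → ℂ}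
    (hy : ∀ k, ‖y k‖ ≤ s) : s * ‖monomialFDeriv I y‖ ≤ (∑ j, I j) * s ^ ∑ j, I j := by
  rw [Nat.cast_sum, sum_mul]
  refine (mul_le_mul_of_nonneg_left (norm_sum_le _ _) hs).trans ?_
  rw [mul_sum]
  refine sum_le_sum fun j _ => ?_
  have hpow : s * ‖(I j : ℂ) * y j ^ (I j - 1)‖ ≤ I j * s ^ I j := by
    rw [norm_mul, Complex.norm_natCast, norm_pow]
    cases I j with
    | zero => simp
    | succ m =>
      rw [Nat.add_sub_cancel, pow_succ', mul_left_comm]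
      gcongr
      exact hy j
  calc s * ‖(∏ k ∈ univ.erase j, y k ^ I k) • (((I j : ℂ) * y j ^ (I j - 1)) •
        (ContinuousLinearMap.proj j : (Fin n → ℂ) →L[ℂ] ℂ))‖
      ≤ ‖∏ k ∈ univ.erase j, y k ^ I k‖ * (s * ‖(I j : ℂ) * y j ^ (I j - 1)‖) := by
        rw [norm_smul, norm_smul, mul_left_comm, ← mul_assoc s, ← mul_assoc]
        exact mul_le_of_le_one_right (by positivity) (norm_proj_le_one j)
    _ ≤ s ^ (∑ k ∈ univ.erase j, I k) * (I j * s ^ I j) := by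
        gcongr
        exact norm_prod_pow_le hy I _
    _ = I j * s ^ ∑ k, I k := by rw [← sum_erase_add _ _ (mem_univ j), pow_add]; ring

section PowerSeries

variable {c : (Fin n → ℕ) → ℂ} {ρ C : ℝ}

theorem summable_coeff_mul_monomial (hc : ∀ I, ‖c I‖ * ρ ^ ∑ j, I j ≤ C) {q : ℝ} (hq0 : 0 ≤ q)
    (hq1 : q < 1) {x : Fin n → ℂ} (hx : ∀ i, ‖x i‖ ≤ q * ρ) :
    Summable fun I => c I * ∏ j, x j ^ I j := by
  refine Summable.of_norm_bounded ((summable_pow_sum hq0 hq1 n).mul_left C) fun I => ?_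
  calc ‖c I * ∏ j, x j ^ I j‖ ≤ ‖c I‖ * (q * ρ) ^ ∑ j, I j := by
        rw [norm_mul]; gcongr; exact norm_prod_pow_le hx I univ
    _ = ‖c I‖ * ρ ^ (∑ j, I j) * q ^ ∑ j, I j := by ring
    _ ≤ C * q ^ ∑ j, I j := by gcongr; exact hc I

theorem norm_smul_monomialFDeriv_le (hρ : 0 < ρ) (hc : ∀ I, ‖c I‖ * ρ ^ ∑ j, I j ≤ C)
    (I : Fin n → ℕ) {y : Fin n → ℂ} (hy : ∀ k, ‖y k‖ ≤ ρ / 4) :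
    ‖c I • monomialFDeriv I y‖ ≤ 4 * C / ρ * (1 / 2) ^ ∑ j, I j := by
  set m := ∑ j, I j
  have hC : 0 ≤ C := (by positivity : 0 ≤ ‖c I‖ * ρ ^ m).trans (hc I)
  have hm : (m : ℝ) ≤ 2 ^ m := by exact_mod_cast m.lt_two_pow_self.le
  refine le_of_mul_le_mul_left ?_ (by positivity : 0 < ρ / 4)
  calc ρ / 4 * ‖c I • monomialFDeriv I y‖ = ‖c I‖ * (ρ / 4 * ‖monomialFDeriv I y‖) := by
        rw [norm_smul]; ring
    _ ≤ ‖c I‖ * (m * (ρ / 4) ^ m) :=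
        mul_le_mul_of_nonneg_left (mul_norm_monomialFDeriv_le (by positivity) I hy)
          (norm_nonneg _)
    _ = ‖c I‖ * ρ ^ m * (m * (1 / 4) ^ m) := by rw [div_eq_mul_one_div ρ, mul_pow]; ring
    _ ≤ C * (2 ^ m * (1 / 4) ^ m) := by gcongr; exact hc I
    _ = ρ / 4 * (4 * C / ρ * (1 / 2) ^ m) := by
        rw [← mul_pow]; field_simp; norm_num

theorem hasFDerivAt_tsum_coeff_mul_monomial (hρ : 0 < ρ) (hc : ∀ I, ‖c I‖ * ρ ^ ∑ j, I j ≤ C)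
    {x : Fin n → ℂ} (hx : ∀ i, ‖x i‖ < ρ / 4) :
    HasFDerivAt (fun y => ∑' I, c I * ∏ j, y j ^ I j) (∑' I, c I • monomialFDeriv I x) x := by
  have mem_ball {y : Fin n → ℂ} : y ∈ Metric.ball 0 (ρ / 4) ↔ ∀ i, ‖y i‖ < ρ / 4 := by
    rw [mem_ball_zero_iff, pi_norm_lt_iff (by positivity)]
  refine hasFDerivAt_tsum_of_isPreconnected
    ((summable_pow_sum (by norm_num) (by norm_num) n).mul_left (4 * C / ρ)) Metric.isOpen_ball
    (convex_ball _ _).isPreconnected (fun I y _ => (hasFDerivAt_monomial I y).const_mul (c I))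
    (fun I y hy => norm_smul_monomialFDeriv_le hρ hc I fun k => (mem_ball.1 hy k).le)
    (mem_ball.2 hx) ?_ (mem_ball.2 hx)
  exact summable_coeff_mul_monomial hc (q := 1 / 4) (by norm_num) (by norm_num)
    fun i => by linarith [hx i]

theorem sum_mul_fderiv_tsum_coeff_mul_monomial (hρ : 0 < ρ)
    (hc : ∀ I, ‖c I‖ * ρ ^ ∑ j, I j ≤ C) (lam : Fin n → ℂ) {x : Fin n → ℂ}
    (hx : ∀ i, ‖x i‖ < ρ / 4) :
    ∑ i, lam i * x i * fderiv ℂ (fun y => ∑' I, c I * ∏ j, y j ^ I j) x (Pi.single i 1) =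
      ∑' I, (∑ j, lam j * I j) * (c I * ∏ j, x j ^ I j) := by
  set E : ((Fin n → ℂ) →L[ℂ] ℂ) →L[ℂ] ℂ :=
    ∑ i, (lam i * x i) • ContinuousLinearMap.apply ℂ ℂ (Pi.single i 1)
  have hE (L : (Fin n → ℂ) →L[ℂ] ℂ) : E L = ∑ i, lam i * x i * L (Pi.single i 1) := by
    simp [E, _root_.sum_apply]
  have hsum : Summable fun I => c I • monomialFDeriv I x :=
    .of_norm_bounded ((summable_pow_sum (by norm_num) (by norm_num) n).mul_left (4 * C / ρ))
      fun I => norm_smul_monomialFDeriv_le hρ hc I fun k => (hx k).le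
  rw [(hasFDerivAt_tsum_coeff_mul_monomial hρ hc hx).fderiv, ← hE, E.map_tsum hsum]
  refine tsum_congr fun I => ?_
  rw [hE, sum_mul]
  refine sum_congr rfl fun i _ => ?_
  rw [smul_apply, smul_eq_mul, mul_left_comm, mul_assoc, mul_monomialFDeriv_single]
  ring

end PowerSeries

theorem exists_norm_mul_pow_sum_le_of_summable {a : (Fin n → ℕ) → ℂ} {ρ : ℝ} (hρ : 0 ≤ ρ)
    (h : Summable fun I => a I * ∏ j, (ρ : ℂ) ^ I j) :
    ∃ C, ∀ I, ‖a I‖ * ρ ^ ∑ j, I j ≤ C := by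
  have hnorm (I : Fin n → ℕ) : ‖a I * ∏ j, (ρ : ℂ) ^ I j‖ = ‖a I‖ * ρ ^ ∑ j, I j := by
    simp [Complex.norm_real, abs_of_nonneg hρ, prod_pow_eq_pow_sum]
  exact ⟨_, fun I => hnorm I ▸ h.norm.le_tsum I fun J _ => norm_nonneg _⟩

end

theorem stmt_8_general (n : ℕ) (lam : Fin n → ℤ)
    (a : (Fin n → ℕ) → ℂ)
    (ha : ∀ I : Fin n → ℕ, (∑ j, (lam j : ℂ) * (I j : ℂ)) = -1 → a I = 0)
    (r : ℝ) (hr : 0 < r)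
    (hconv : ∀ x : Fin n → ℂ, (∀ i, ‖x i‖ < r) →
      Summable fun I : Fin n → ℕ => a I * ∏ j, x j ^ I j) :
    ∃ s : ℝ, 0 < s ∧ s ≤ r ∧
      ∀ x : Fin n → ℂ, (∀ i, ‖x i‖ < s) →
        (Summable fun I : Fin n → ℕ =>
          (-a I / (1 + ∑ j, (lam j : ℂ) * (I j : ℂ))) * ∏ j, x j ^ I j) ∧
        (∑ i, (lam i : ℂ) * x i *
            fderiv ℂ (fun y : Fin n → ℂ => ∑' I : Fin n → ℕ,
              (-a I / (1 + ∑ j, (lam j : ℂ) * (I j : ℂ))) * ∏ j, y j ^ I j)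
              x (Pi.single i 1))
          + (∑' I : Fin n → ℕ, (-a I / (1 + ∑ j, (lam j : ℂ) * (I j : ℂ))) * ∏ j, x j ^ I j)
          + (∑' I : Fin n → ℕ, a I * ∏ j, x j ^ I j) = 0 := by
  set b : (Fin n → ℕ) → ℂ := fun I => -a I / (1 + ∑ j, (lam j : ℂ) * (I j : ℂ))
  obtain ⟨C, ha_le⟩ := exists_norm_mul_pow_sum_le_of_summable (half_pos hr).le
    (hconv _ fun i => by simpa [abs_of_pos hr] using half_lt_self hr)
  have hb_le (I : Fin n → ℕ) : ‖b I‖ * (r / 2) ^ ∑ j, I j ≤ C := by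
    refine le_trans (mul_le_mul_of_nonneg_right ?_ (by positivity)) (ha_le I)
    simpa [b, norm_neg] using norm_div_one_add_intCast_le (-a I) (∑ j, lam j * I j)
  have hb_mul (I : Fin n → ℕ) : (1 + ∑ j, (lam j : ℂ) * I j) * b I = -a I := by
    rcases eq_or_ne (1 + ∑ j, (lam j : ℂ) * I j) 0 with h | h
    · rw [h, zero_mul, ha I (by linear_combination h), neg_zero]
    · exact mul_div_cancel₀ _ h
  refine ⟨r / 8, by positivity, by linarith, fun x hx => ?_⟩
  have hx' (i : Fin n) : ‖x i‖ < r / 2 / 4 := by linarith [hx i]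
  have hbx : Summable fun I => b I * ∏ j, x j ^ I j :=
    summable_coeff_mul_monomial hb_le (q := 1 / 4) (by norm_num) (by norm_num)
      fun i => by linarith [hx i]
  have hax := hconv x fun i => by linarith [hx i]
  have hterm (I : Fin n → ℕ) : (∑ j, (lam j : ℂ) * I j) * (b I * ∏ j, x j ^ I j) =
      -(a I * ∏ j, x j ^ I j) - b I * ∏ j, x j ^ I j := by
    linear_combination (∏ j, x j ^ I j) * hb_mul I
  refine ⟨hbx, ?_⟩
  rw [sum_mul_fderiv_tsum_coeff_mul_monomial (half_pos hr) hb_le _ hx', tsum_congr hterm,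
    hax.neg.tsum_sub hbx, tsum_neg]
  ring

/-- solution of the homological equation. If `λ₁,…,λₙ` are nonzero
integers and `h = Σ a_I x^I` converges near `0` with `a_I = 0` whenever
`⟨λ,I⟩ = −1`, then `g = Σ b_I x^I` with `b_I = −a_I/(1+⟨λ,I⟩)` converges near `0`
and satisfies `Σᵢ λᵢxᵢ ∂g/∂xᵢ + g + h = 0` there. (When `⟨λ,I⟩ = −1` the formula
gives `b_I = 0` since `a_I = 0`.) -/
theorem stmt_8 (n : ℕ) (lam : Fin n → ℤ) (hlam : ∀ i, lam i ≠ 0)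
    (a : (Fin n → ℕ) → ℂ)
    (ha : ∀ I : Fin n → ℕ, (∑ j, (lam j : ℂ) * (I j : ℂ)) = -1 → a I = 0)
    (r : ℝ) (hr : 0 < r)
    (hconv : ∀ x : Fin n → ℂ, (∀ i, ‖x i‖ < r) →
      Summable fun I : Fin n → ℕ => a I * ∏ j, x j ^ I j) :
    ∃ s : ℝ, 0 < s ∧ s ≤ r ∧
      ∀ x : Fin n → ℂ, (∀ i, ‖x i‖ < s) →
        (Summable fun I : Fin n → ℕ =>
          (-a I / (1 + ∑ j, (lam j : ℂ) * (I j : ℂ))) * ∏ j, x j ^ I j) ∧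
        (∑ i, (lam i : ℂ) * x i *
            fderiv ℂ (fun y : Fin n → ℂ => ∑' I : Fin n → ℕ,
              (-a I / (1 + ∑ j, (lam j : ℂ) * (I j : ℂ))) * ∏ j, y j ^ I j)
              x (Pi.single i 1))
          + (∑' I : Fin n → ℕ, (-a I / (1 + ∑ j, (lam j : ℂ) * (I j : ℂ))) * ∏ j, x j ^ I j)
          + (∑' I : Fin n → ℕ, a I * ∏ j, x j ^ I j) = 0 :=
  stmt_8_general n lam a ha r hr hconv
end

section
/- Consider the differential equation z h'(z) + h(z) + (1/2) z h(z)² + r(z) = 0, where r is holomorphic at 0 with r(0) = 0. Then there exists a solution h holomorphic at 0. -/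
/-!
Write `h = ∑ aₙ zⁿ` and `r = ∑ qₙ zⁿ`. Comparing coefficients of `zⁿ⁺¹` gives
`(n + 2) aₙ₊₁ = -(1/2) ∑_{i+j=n} aᵢ aⱼ - qₙ₊₁`, which determines the `aₙ` recursively with `a₀ = 0`;
the factor `n + 2` never vanishes because the linear part `z h' + h` has indicial root `-1`.
If `‖qₙ‖ ≤ Bⁿ⁺¹`, induction gives `‖aₙ‖ ≤ Bⁿ⁺¹`, since the convolution contributes at most
`(n + 1) Bⁿ⁺²/2`. So `∑ aₙ zⁿ` has positive radius, and its sum satisfies the equation because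
every coefficient of the left-hand side vanishes.
-/

open Finset Finset.HasAntidiagonal Topology FormalMultilinearSeries
open scoped NNReal

section Coefficients

variable {𝕜 : Type*} [Field 𝕜]

def briotBouquetCoeff (q : ℕ → 𝕜) : ℕ → 𝕜
  | 0 => 0
  | n + 1 => -((∑ ij ∈ (antidiagonal n).attach,
      briotBouquetCoeff q ij.1.1 * briotBouquetCoeff q ij.1.2) / 2 + q (n + 1)) / (n + 2)
  decreasing_by
  · exact Nat.lt_succ_of_le (antidiagonal.fst_le ij.2)
  · exact Nat.lt_succ_of_le (antidiagonal.snd_le ij.2)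

@[simp]
theorem briotBouquetCoeff_zero (q : ℕ → 𝕜) : briotBouquetCoeff q 0 = 0 := by
  rw [briotBouquetCoeff]

theorem briotBouquetCoeff_succ (q : ℕ → 𝕜) (n : ℕ) :
    briotBouquetCoeff q (n + 1) = -((∑ ij ∈ antidiagonal n,
      briotBouquetCoeff q ij.1 * briotBouquetCoeff q ij.2) / 2 + q (n + 1)) / (n + 2) := by
  rw [briotBouquetCoeff,
    sum_attach (antidiagonal n) fun ij => briotBouquetCoeff q ij.1 * briotBouquetCoeff q ij.2]

theorem briotBouquetCoeff_recurrence [CharZero 𝕜] (q : ℕ → 𝕜) (n : ℕ) :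
    (n + 2) * briotBouquetCoeff q (n + 1) +
      (∑ ij ∈ antidiagonal n, briotBouquetCoeff q ij.1 * briotBouquetCoeff q ij.2) / 2 +
        q (n + 1) = 0 := by
  have : (n + 2 : 𝕜) ≠ 0 := by norm_cast
  rw [briotBouquetCoeff_succ]
  field_simp
  ring

end Coefficients

theorem norm_sum_antidiagonal_mul_le {R : Type*} [SeminormedRing R] {a : ℕ → R} {B : ℝ} {n : ℕ}
    (ha : ∀ i ≤ n, ‖a i‖ ≤ B ^ (i + 1)) :
    ‖∑ ij ∈ antidiagonal n, a ij.1 * a ij.2‖ ≤ (n + 1) * B ^ (n + 2) := by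
  calc ‖∑ ij ∈ antidiagonal n, a ij.1 * a ij.2‖
      ≤ ∑ ij ∈ antidiagonal n, ‖a ij.1‖ * ‖a ij.2‖ :=
        (norm_sum_le _ _).trans (sum_le_sum fun _ _ => norm_mul_le _ _)
    _ ≤ ∑ _ij ∈ antidiagonal n, B ^ (n + 2) := sum_le_sum fun ij hij => by
        have hi := ha _ (antidiagonal.fst_le hij)
        calc ‖a ij.1‖ * ‖a ij.2‖ ≤ B ^ (ij.1 + 1) * B ^ (ij.2 + 1) :=
              mul_le_mul hi (ha _ (antidiagonal.snd_le hij)) (norm_nonneg _)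
                ((norm_nonneg _).trans hi)
          _ = B ^ (n + 2) := by rw [← pow_add, ← mem_antidiagonal.mp hij]; ring_nf
    _ = (n + 1) * B ^ (n + 2) := by simp

theorem norm_briotBouquetCoeff_le {𝕜 : Type*} [RCLike 𝕜] {q : ℕ → 𝕜} {B : ℝ}
    (hq : ∀ n, ‖q n‖ ≤ B ^ (n + 1)) (n : ℕ) : ‖briotBouquetCoeff q n‖ ≤ B ^ (n + 1) := by
  have hB : 0 ≤ B := by simpa using (norm_nonneg _).trans (hq 0)
  induction n using Nat.strong_induction_on with
  | _ n ih =>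
  cases n with
  | zero => simpa using hB
  | succ n =>
    have hconv := norm_sum_antidiagonal_mul_le fun i hi => ih i (Nat.lt_succ_of_le hi)
    have hden : ‖(n + 2 : 𝕜)‖ = n + 2 := by exact_mod_cast RCLike.norm_natCast (K := 𝕜) (n + 2)
    rw [briotBouquetCoeff_succ, norm_div, norm_neg, hden, div_le_iff₀ (by positivity)]
    calc _ ≤ ‖∑ ij ∈ antidiagonal n, briotBouquetCoeff q ij.1 * briotBouquetCoeff q ij.2‖ / 2
          + ‖q (n + 1)‖ := by
          refine (norm_add_le _ _).trans_eq ?_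
          rw [norm_div, RCLike.norm_two]
      _ ≤ (n + 1) * B ^ (n + 2) / 2 + B ^ (n + 2) := by gcongr; exact hq _
      _ ≤ B ^ (n + 1 + 1) * (n + 2) := by
          have : 0 ≤ B ^ (n + 2) := by positivity
          nlinarith

theorem FormalMultilinearSeries.radius_pos_iff_exists_norm_le_pow_succ {𝕜 E F : Type*}
    [NontriviallyNormedField 𝕜] [NormedAddCommGroup E] [NormedSpace 𝕜 E] [NormedAddCommGroup F]
    [NormedSpace 𝕜 F] (p : FormalMultilinearSeries 𝕜 E F) :
    0 < p.radius ↔ ∃ B : ℝ, ∀ n, ‖p n‖ ≤ B ^ (n + 1) := by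
  constructor
  · intro hp
    obtain ⟨r, hr0, hr⟩ := ENNReal.lt_iff_exists_nnreal_btwn.mp hp
    obtain ⟨C, -, hpC⟩ := p.norm_le_div_pow_of_pos_of_lt_radius (mod_cast hr0) hr
    refine ⟨max C (r : ℝ)⁻¹, fun n => ?_⟩
    calc ‖p n‖ ≤ C * (r : ℝ)⁻¹ ^ n := by simpa [div_eq_mul_inv] using hpC n
      _ ≤ max C (r : ℝ)⁻¹ * max C (r : ℝ)⁻¹ ^ n := by
          have hr : 0 ≤ (r : ℝ)⁻¹ := by positivity
          exact mul_le_mul (le_max_left _ _) (pow_le_pow_left₀ hr (le_max_right _ _) n)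
            (by positivity) (hr.trans (le_max_right _ _))
      _ = _ := (pow_succ' _ _).symm
  · rintro ⟨B, hB⟩
    have hB0 : 0 ≤ B := by simpa using (norm_nonneg _).trans (hB 0)
    let r : ℝ≥0 := ⟨(B + 1)⁻¹, by positivity⟩
    refine lt_of_lt_of_le ?_ (p.le_radius_of_bound (B + 1) (r := r) fun n => ?_)
    · exact ENNReal.coe_pos.mpr (by rw [← NNReal.coe_pos]; exact inv_pos.mpr (by positivity))
    · calc ‖p n‖ * (r : ℝ) ^ n ≤ (B + 1) ^ (n + 1) * (B + 1)⁻¹ ^ n := by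
            gcongr
            · exact (hB n).trans (by gcongr; linarith)
            · rfl
        _ = B + 1 := by
            rw [pow_succ, inv_pow, mul_right_comm, mul_inv_cancel₀ (by positivity), one_mul]

section PowerSeries

variable {𝕜 F : Type*} [NontriviallyNormedField 𝕜] [NormedAddCommGroup F] [NormedSpace 𝕜 F]
  {f : 𝕜 → F} {p : FormalMultilinearSeries 𝕜 𝕜 F}

theorem HasFPowerSeriesAt.eventually_hasSum_pow_smul_coeff (hf : HasFPowerSeriesAt f p 0) :
    ∀ᶠ z in 𝓝 0, HasSum (fun n => z ^ n • p.coeff n) (f z) := by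
  filter_upwards [hf.eventually_hasSum] with z hz
  simpa [apply_eq_pow_smul_coeff] using hz

theorem HasFPowerSeriesAt.eventually_hasSum_smul_deriv [CompleteSpace F]
    (hf : HasFPowerSeriesAt f p 0) :
    ∀ᶠ z : 𝕜 in 𝓝 0, HasSum (fun n : ℕ => ((n : 𝕜) * z ^ n) • p.coeff n) (z • deriv f z) := by
  obtain ⟨r, hr⟩ := hf
  filter_upwards [hr.fderiv.eventually_hasSum] with z hz
  have hz' := hz.mapL (ContinuousLinearMap.apply 𝕜 F z)
  simp only [ContinuousLinearMap.apply_apply, derivSeries_apply_diag, zero_add] at hz'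
  simp only [apply_eq_pow_smul_coeff] at hz'
  rw [← hasSum_nat_add_iff' 1]
  convert hz' using 1
  · funext n
    push_cast
    module
  · simp

end PowerSeries

theorem HasFPowerSeriesAt.eventually_hasSum_sq {𝕜 A : Type*} [NontriviallyNormedField 𝕜]
    [NormedRing A] [NormedAlgebra 𝕜 A] [CompleteSpace A] {f : 𝕜 → A}
    {p : FormalMultilinearSeries 𝕜 𝕜 A} (hf : HasFPowerSeriesAt f p 0) :
    ∀ᶠ z in 𝓝 0,
      HasSum (fun n => z ^ n • ∑ ij ∈ antidiagonal n, p.coeff ij.1 * p.coeff ij.2) (f z ^ 2) := by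
  filter_upwards [hf.eventually_hasSum_pow_smul_coeff, Metric.eball_mem_nhds 0 hf.radius_pos]
    with z hz hzp
  have hnorm : Summable fun n => ‖z ^ n • p.coeff n‖ := by
    simpa [apply_eq_pow_smul_coeff] using p.summable_norm_apply hzp
  have hcauchy := (summable_norm_sum_mul_antidiagonal_of_summable_norm hnorm hnorm).of_norm.hasSum
  rw [← tsum_mul_tsum_eq_tsum_sum_antidiagonal_of_summable_norm hnorm hnorm, hz.tsum_eq,
    ← sq] at hcauchy
  have hterm (n : ℕ) : ∑ ij ∈ antidiagonal n, z ^ ij.1 • p.coeff ij.1 * z ^ ij.2 • p.coeff ij.2 =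
      z ^ n • ∑ ij ∈ antidiagonal n, p.coeff ij.1 * p.coeff ij.2 := by
    rw [smul_sum]
    refine sum_congr rfl fun ij hij => ?_
    rw [smul_mul_smul_comm, ← pow_add, mem_antidiagonal.mp hij]
  simpa only [hterm] using hcauchy

theorem briotBouquet_eq_zero_of_hasSum {𝕜 : Type*} [NormedField 𝕜] [CharZero 𝕜] {q : ℕ → 𝕜}
    (hq0 : q 0 = 0) {z u v w : 𝕜}
    (hu : HasSum (fun n : ℕ => (n * z ^ n) * briotBouquetCoeff q n) u)
    (hv : HasSum (fun n => z ^ n * briotBouquetCoeff q n) v)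
    (hv2 : HasSum (fun n => z ^ n *
      ∑ ij ∈ antidiagonal n, briotBouquetCoeff q ij.1 * briotBouquetCoeff q ij.2) (v ^ 2))
    (hw : HasSum (fun n => z ^ n * q n) w) :
    u + v + z * v ^ 2 / 2 + w = 0 := by
  have hlin := (hu.add hv).add hw
  rw [← hasSum_nat_add_iff' 1] at hlin
  simp only [range_one, sum_singleton, briotBouquetCoeff_zero, hq0, mul_zero, add_zero,
    sub_zero] at hlin
  have hsum := hlin.add (hv2.mul_left (z / 2))
  rw [show u + v + z * v ^ 2 / 2 + w = u + v + w + z / 2 * v ^ 2 by ring]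
  refine hsum.unique ?_
  convert hasSum_zero with n
  push_cast
  linear_combination z ^ (n + 1) * briotBouquetCoeff_recurrence q n

/-- Briot–Bouquet: the equation `z h' + h + (1/2) z h² + r = 0`,
with `r` holomorphic at `0` and `r(0) = 0`, has a solution `h` holomorphic at `0`. -/
theorem stmt_16 (r : ℂ → ℂ) (hr : AnalyticAt ℂ r 0) (hr0 : r 0 = 0) :
    ∃ h : ℂ → ℂ, AnalyticAt ℂ h 0 ∧
      ∀ᶠ z in nhds (0 : ℂ),
        z * deriv h z + h z + z * (h z) ^ 2 / 2 + r z = 0 := by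
  obtain ⟨pr, hpr⟩ := hr
  have hq0 : pr.coeff 0 = 0 := hr0 ▸ hpr.coeff_zero 1
  obtain ⟨B, hB⟩ := pr.radius_pos_iff_exists_norm_le_pow_succ.mp hpr.radius_pos
  set a := briotBouquetCoeff pr.coeff
  have ha : ∀ n, ‖a n‖ ≤ B ^ (n + 1) :=
    norm_briotBouquetCoeff_le fun n => (norm_apply_eq_norm_coef (p := pr) (n := n)) ▸ hB n
  have hrad : 0 < (ofScalars ℂ a).radius :=
    (ofScalars ℂ a).radius_pos_iff_exists_norm_le_pow_succ.mpr ⟨B, fun n => by simpa using ha n⟩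
  have hh := ((ofScalars ℂ a).hasFPowerSeriesOnBall hrad).hasFPowerSeriesAt
  refine ⟨_, hh.analyticAt, ?_⟩
  filter_upwards [hh.eventually_hasSum_smul_deriv, hh.eventually_hasSum_pow_smul_coeff,
    hh.eventually_hasSum_sq, hpr.eventually_hasSum_pow_smul_coeff] with z hu hv hv2 hw
  simp only [coeff_ofScalars, smul_eq_mul] at hu hv hv2 hw
  exact briotBouquet_eq_zero_of_hasSum hq0 hu hv hv2 hw
end

section
/- Let Y = Σ_{i=1}^n λᵢ zᵢ ∂/∂zᵢ with λᵢ ∈ ℤ, p₁,…,p_k ∈ ℤ with Σ_{i=1}^k λᵢpᵢ = −1, and u a non-vanishing holomorphic function near 0 ∈ ℂⁿ with Yu ≡ 0. Define wᵢ = u^{−λᵢ} zᵢ for i ≤ k and wᵢ = zᵢ for i > k. Then the vector field Z = u · z₁^{p₁}⋯z_k^{p_k} · Y satisfies Z wᵢ = λᵢ (w₁^{p₁}⋯w_k^{p_k}) wᵢ for all i, i.e. in the coordinates w, Z = w₁^{p₁}⋯w_k^{p_k} Σ λᵢ wᵢ ∂/∂wᵢ. -/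
/-!
Write `Y z = (λⱼ zⱼ)ⱼ`, so that the direction of `Z` at `z` is `c • Y z` with
`c = u z · ∏_{l ≤ k} z_l^{p_l}`. Each `wᵢ` is `fᵢ · zᵢ` with `fᵢ = u^{-λᵢ}` or `fᵢ = 1`; since
`Yu = 0`, also `Y fᵢ = 0`, so the Leibniz rule gives `Z wᵢ = c · fᵢ(z) · λᵢ zᵢ = c λᵢ wᵢ`.
Finally `Σ λ_l p_l = -1` turns `∏ w_l^{p_l} = u^{-Σ λ_l p_l} ∏ z_l^{p_l}` into `c`.
-/

open Finset

theorem zpow_sum₀ {K ι : Type*} [CommGroupWithZero K] {a : K} (ha : a ≠ 0) (s : Finset ι)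
    (f : ι → ℤ) : a ^ (∑ i ∈ s, f i) = ∏ i ∈ s, a ^ f i := by
  classical
  induction s using Finset.induction with
  | empty => simp
  | insert j s hj ih => rw [sum_insert hj, prod_insert hj, zpow_add₀ ha, ih]

theorem prod_zpow_mul_zpow {K ι : Type*} [CommGroupWithZero K] {a : K} (ha : a ≠ 0)
    (s : Finset ι) (e p : ι → ℤ) (x : ι → K) :
    ∏ l ∈ s, (a ^ e l * x l) ^ p l = a ^ (∑ l ∈ s, e l * p l) * ∏ l ∈ s, x l ^ p l := by
  simp only [mul_zpow, ← zpow_mul, prod_mul_distrib, zpow_sum₀ ha]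

section Leibniz

variable {𝕜 E : Type*} [NontriviallyNormedField 𝕜] [NormedAddCommGroup E] [NormedSpace 𝕜 E]

theorem fderiv_zpow_apply_eq_zero {u : E → 𝕜} {z v : E} (hu : DifferentiableAt 𝕜 u z)
    (huz : u z ≠ 0) (huv : fderiv 𝕜 u z v = 0) (m : ℤ) :
    fderiv 𝕜 (fun y => u y ^ m) z v = 0 := by
  have hcomp := (hasDerivAt_zpow m (u z) (Or.inl huz)).comp_hasFDerivAt z hu.hasFDerivAt
  rw [Function.comp_def] at hcomp
  rw [hcomp.fderiv, smul_apply, huv, smul_zero]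

theorem fderiv_mul_apply_of_fderiv_apply_eq_zero {f g : E → 𝕜} {z v : E}
    (hf : DifferentiableAt 𝕜 f z) (hg : DifferentiableAt 𝕜 g z) (hfv : fderiv 𝕜 f z v = 0) :
    fderiv 𝕜 (fun y => f y * g y) z v = f z * fderiv 𝕜 g z v := by
  rw [fderiv_fun_mul hf hg, add_apply, smul_apply, smul_apply, hfv, smul_zero, add_zero, smul_eq_mul]

end Leibniz

theorem stmt_19_general (n k : ℕ)
    (lam p : Fin n → ℤ)
    (hsum : ∑ i ∈ Finset.univ.filter (fun i : Fin n => (i : ℕ) < k), lam i * p i = -1)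
    (U : Set (Fin n → ℂ)) (hU : IsOpen U)
    (u : (Fin n → ℂ) → ℂ) (hu : DifferentiableOn ℂ u U)
    (huz : ∀ z ∈ U, u z ≠ 0)
    (hYu : ∀ z ∈ U, fderiv ℂ u z (fun i => (lam i : ℂ) * z i) = 0) :
    ∀ z ∈ U, ∀ i : Fin n,
      fderiv ℂ (fun y => (if (i : ℕ) < k then u y ^ (-(lam i)) else 1) * y i) z
          (fun j => (u z * ∏ l ∈ Finset.univ.filter (fun l : Fin n => (l : ℕ) < k),
              z l ^ p l) * ((lam j : ℂ) * z j))
        = (lam i : ℂ)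
          * (∏ l ∈ Finset.univ.filter (fun l : Fin n => (l : ℕ) < k),
              (u z ^ (-(lam l)) * z l) ^ p l)
          * ((if (i : ℕ) < k then u z ^ (-(lam i)) else 1) * z i) := by
  intro z hz i
  set s := univ.filter (fun l : Fin n => (l : ℕ) < k)
  set c := u z * ∏ l ∈ s, z l ^ p l
  set f : (Fin n → ℂ) → ℂ := fun y => if (i : ℕ) < k then u y ^ (-(lam i)) else 1
  have hdu : DifferentiableAt ℂ u z := hu.differentiableAt (hU.mem_nhds hz)
  have hf : DifferentiableAt ℂ f z ∧ fderiv ℂ f z (fun j => (lam j : ℂ) * z j) = 0 := by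
    by_cases hik : (i : ℕ) < k
    · simp only [f, hik, if_true]
      exact ⟨hdu.zpow (Or.inl (huz z hz)),
        fderiv_zpow_apply_eq_zero hdu (huz z hz) (hYu z hz) (-(lam i))⟩
    · simp [f, hik]
  have hprod : ∏ l ∈ s, (u z ^ (-(lam l)) * z l) ^ p l = c := by
    rw [prod_zpow_mul_zpow (huz z hz)]
    simp only [neg_mul, sum_neg_distrib, hsum, neg_neg, zpow_one, c]
  rw [hprod, show (fun j => c * ((lam j : ℂ) * z j)) = c • fun j => (lam j : ℂ) * z j from rfl,
    fderiv_mul_apply_of_fderiv_apply_eq_zero hf.1 (differentiableAt_apply i z)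
      (by rw [map_smul, hf.2, smul_zero]),
    (hasFDerivAt_apply i z).fderiv]
  simp only [ContinuousLinearMap.proj_apply, Pi.smul_apply, smul_eq_mul, f]
  ring

/-- let `Y = Σ λᵢzᵢ∂/∂zᵢ` with `λᵢ ∈ ℤ`, `p₁,…,p_k ∈ ℤ` with
`Σ_{i≤k} λᵢpᵢ = −1`, and `u` a non-vanishing holomorphic function near `0` with
`Yu ≡ 0`. Set `wᵢ = u^{−λᵢ} zᵢ` for `i ≤ k` and `wᵢ = zᵢ` for `i > k`. Then
`Z = u·z₁^{p₁}⋯z_k^{p_k}·Y` satisfies `Z wᵢ = λᵢ (w₁^{p₁}⋯w_k^{p_k}) wᵢ`, i.e.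
in the coordinates `w`, `Z = w₁^{p₁}⋯w_k^{p_k} Σ λᵢwᵢ∂/∂wᵢ`. (`Z wᵢ` is the
directional derivative of the function `wᵢ` along the vector field `Z`.) -/
theorem stmt_19 (n k : ℕ) (hk : k ≤ n)
    (lam p : Fin n → ℤ)
    (hsum : ∑ i ∈ Finset.univ.filter (fun i : Fin n => (i : ℕ) < k), lam i * p i = -1)
    (U : Set (Fin n → ℂ)) (hU : IsOpen U) (hU0 : (0 : Fin n → ℂ) ∈ U)
    (u : (Fin n → ℂ) → ℂ) (hu : DifferentiableOn ℂ u U)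
    (huz : ∀ z ∈ U, u z ≠ 0)
    (hYu : ∀ z ∈ U, fderiv ℂ u z (fun i => (lam i : ℂ) * z i) = 0) :
    ∀ z ∈ U, ∀ i : Fin n,
      fderiv ℂ (fun y => (if (i : ℕ) < k then u y ^ (-(lam i)) else 1) * y i) z
          (fun j => (u z * ∏ l ∈ Finset.univ.filter (fun l : Fin n => (l : ℕ) < k),
              z l ^ p l) * ((lam j : ℂ) * z j))
        = (lam i : ℂ)
          * (∏ l ∈ Finset.univ.filter (fun l : Fin n => (l : ℕ) < k),
              (u z ^ (-(lam l)) * z l) ^ p l)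
          * ((if (i : ℕ) < k then u z ^ (-(lam i)) else 1) * z i) :=
  stmt_19_general n k lam p hsum U hU u hu huz hYu
end
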